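/- arXiv:1905.09013 — 2 statements merged into one kernel-verified Lean document; each statement's English description precedes it below -/
import Mathlib

section
/- Let G be a finite abelian group and x ∈ G. If s₁,...,s_{n-1} are independent and uniformly distributed on G and s_n = x - (s₁ + ⋯ + s_{n-1}), then for any proper subset T ⊊ {1,...,n}, the joint distribution of (s_i)_{i∈T} is uniform on G^{|T|} and is independent of x. -/
/-!
The map sending the random shares `u` to `(sᵢ)_{i ∈ T}` is affine: it is the restriction to `T`
of the homomorphism `u ↦ (u, -∑ u)` onto the zero-sum vectors, translated by `x` in the last
coordinate. If `T` misses an index `k`, any prescribed values on `T` extend to a zero-sum vector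
by adjusting coordinate `k`, so the homomorphic part is surjective. A surjective homomorphism of
finite groups has fibres of equal size (cosets of its kernel), so it and every translate of it
push the uniform distribution forward to the uniform distribution.
-/

open Finset Function

namespace PMF

theorem map_uniformOfFintype_of_card_fiber_eq {α β : Type*} [Fintype α] [Nonempty α]
    [Fintype β] [Nonempty β] [DecidableEq β] (f : α → β)
    (hf : ∀ b b', #{a | f a = b} = #{a | f a = b'}) :
    (uniformOfFintype α).map f = uniformOfFintype β := by
  ext b
  have hcard : Fintype.card α = Fintype.card β * #{a | f a = b} := by
    rw [← card_univ, card_eq_sum_card_fiberwise fun a _ => mem_univ (f a)]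
    simp [hf _ b]
  have hfiber : #{a | f a = b} ≠ 0 := by
    intro h
    simp [h] at hcard
  rw [map_apply, tsum_fintype]
  simp only [uniformOfFintype_apply]
  rw [← sum_filter, sum_const, nsmul_eq_mul, hcard]
  simp only [eq_comm (a := b)]
  push_cast
  rw [ENNReal.mul_inv (by simp) (by simp), mul_comm, mul_assoc,
    ENNReal.inv_mul_cancel (by exact_mod_cast hfiber) (by simp), mul_one]

theorem map_uniformOfFintype_addMonoidHom_add_const {A B : Type*} [AddGroup A] [Fintype A]
    [AddGroup B] [Fintype B] (f : A →+ B) (hf : Surjective f) (c : B) :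
    (uniformOfFintype A).map (fun a => f a + c) = uniformOfFintype B := by
  classical
  refine map_uniformOfFintype_of_card_fiber_eq _ fun b b' => ?_
  simp only [← eq_sub_iff_add_eq]
  exact AddMonoidHom.card_fiber_eq_of_mem_range f (hf _) (hf _)

end PMF

theorem Finset.exists_sum_eq_zero_of_ne_univ {ι G : Type*} [Fintype ι] [AddCommGroup G]
    {T : Finset ι} (hT : T ≠ univ) (t : T → G) :
    ∃ s : ι → G, ∑ i, s i = 0 ∧ ∀ i : T, s i = t i := by
  classical
  obtain ⟨k, hk⟩ : ∃ k, k ∉ T := by simpa [eq_univ_iff_forall] using hT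
  let s₀ : ι → G := fun i => if h : i ∈ T then t ⟨i, h⟩ else 0
  refine ⟨s₀ - Pi.single k (∑ i, s₀ i), by simp [sum_sub_distrib], fun i => ?_⟩
  have hik : (i : ι) ≠ k := fun h => hk (h ▸ i.2)
  simp [s₀, hik]

section Shares

variable {G : Type*} [AddCommGroup G] {n : ℕ}

def sharesOfZero (n : ℕ) : (Fin n → G) →+ (Fin (n + 1) → G) where
  toFun u := Fin.snoc u (-∑ j, u j)
  map_zero' := by
    ext i
    refine Fin.lastCases ?_ (fun j => ?_) i <;> simp
  map_add' u v := by
    ext i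
    refine Fin.lastCases ?_ (fun j => ?_) i <;> simp [sum_add_distrib, add_comm]

theorem snoc_sub_sum_eq_sharesOfZero_add (x : G) (u : Fin n → G) :
    (Fin.snoc u (x - ∑ j, u j) : Fin (n + 1) → G) =
      sharesOfZero n u + Pi.single (Fin.last n) x := by
  ext i
  refine Fin.lastCases ?_ (fun j => ?_) i <;> simp [sharesOfZero, sub_eq_neg_add]

theorem sharesOfZero_init {s : Fin (n + 1) → G} (hs : ∑ i, s i = 0) :
    sharesOfZero n (Fin.init s) = s := by
  rw [Fin.sum_univ_castSucc, add_eq_zero_iff_neg_eq] at hs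
  conv_rhs => rw [← Fin.snoc_init_self s, ← hs]
  rfl

theorem exists_sharesOfZero_restrict_eq {T : Finset (Fin (n + 1))} (hT : T ≠ univ)
    (t : T → G) : ∃ u, ∀ i : T, sharesOfZero n u i = t i := by
  obtain ⟨s, hs, hst⟩ := exists_sum_eq_zero_of_ne_univ hT t
  exact ⟨Fin.init s, by simpa [sharesOfZero_init hs] using hst⟩

end Shares

/-- n-out-of-n additive secret sharing: if s₁,...,s_n are uniform i.i.d. and the
last share is x - (s₁ + ⋯ + s_n), then the restriction of the shares to any
proper subset T of the indices is uniformly distributed on G^T, independently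
of the secret x. -/
theorem stmt_13 (G : Type*) [AddCommGroup G] [Fintype G] (n : ℕ)
    (T : Finset (Fin (n + 1))) (hT : T ≠ Finset.univ) (x : G) :
    (PMF.uniformOfFintype (Fin n → G)).map
        (fun (u : Fin n → G) => (fun i : T => (Fin.snoc u (x - ∑ j, u j) : Fin (n+1) → G) (i : Fin (n + 1)) : T → G))
      = PMF.uniformOfFintype (T → G) := by
  let restrictShares : (Fin n → G) →+ (T → G) :=
    AddMonoidHom.pi fun i =>
      (Pi.evalAddMonoidHom (fun _ => G) (i : Fin (n + 1))).comp (sharesOfZero n)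
  have hsurj : Surjective restrictShares := fun t =>
    (exists_sharesOfZero_restrict_eq hT t).imp fun _ h => funext h
  convert PMF.map_uniformOfFintype_addMonoidHom_add_const restrictShares hsurj
    (fun i => (Pi.single (Fin.last n) x : Fin (n + 1) → G) i) using 2 with u
  ext i
  simp [restrictShares, snoc_sub_sum_eq_sharesOfZero_add]
end

section
/- Let α, β ∈ {0,...,q_∞} and S > 2·q_∞. Writing each x_k = (b_k - a_k) mod S with ∑ a_k ≡ α and ∑ b_k ≡ β (mod S), the function f(x₁,...,x_n) = [((∑ x_k) mod S) ∈ {1,...,q_∞}] correctly outputs true iff α < β, regardless of how the individual a_k, b_k are distributed among the parties. -/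
/-- Correctness of the Boolean function computed by the Ben-Efraim–Omri MPC:
each party inputs x_k = (b_k - a_k) mod S; summing the inputs mod S and testing
membership in {1,...,q_∞} outputs true iff α < β, regardless of how the a_k, b_k
are distributed among the parties. -/
theorem stmt_18 (n : ℕ) (S qinf α β : ℤ)
    (hS : 2 * qinf < S) (hα0 : 0 ≤ α) (hα1 : α ≤ qinf) (hβ0 : 0 ≤ β) (hβ1 : β ≤ qinf)
    (a b x : Fin n → ℤ)
    (ha : (∑ k, a k) % S = α % S) (hb : (∑ k, b k) % S = β % S)
    (hx : ∀ k, x k = (b k - a k) % S) :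
    ((1 ≤ (∑ k, x k) % S ∧ (∑ k, x k) % S ≤ qinf) ↔ α < β) := by
  have hq0 : 0 ≤ qinf := le_trans hα0 hα1
  have hS0 : 0 < S := by linarith
  have key : (∑ k, x k) % S = (β - α) % S := by
    have h1 : (∑ k, x k) = ∑ k, (b k - a k) % S :=
      Finset.sum_congr rfl fun k _ => hx k
    rw [h1, ← Finset.sum_int_mod, Finset.sum_sub_distrib, Int.sub_emod, ha, hb, ← Int.sub_emod]
  rw [key]
  rcases lt_or_ge α β with h | h
  · have hlt : 0 ≤ β - α := by linarith
    have hlt2 : β - α < S := by linarith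
    rw [Int.emod_eq_of_lt hlt hlt2]
    constructor
    · intro _; exact h
    · intro _; constructor <;> linarith
  · constructor
    · intro ⟨h1, h2⟩
      rcases eq_or_lt_of_le h with heq | hlt
      · rw [heq] at h1; simp at h1
      · have e : (β - α) % S = β - α + S := by
          have h3 : (β - α) % S = (β - α + S) % S := by
            conv_rhs => rw [Int.add_emod, Int.emod_self, add_zero, Int.emod_emod_of_dvd _ dvd_rfl]
          rw [h3, Int.emod_eq_of_lt (by linarith) (by linarith)]
        rw [e] at h2
        linarith
    · intro hc; linarith
end
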